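/- arXiv:1205.4006 — 5 statements merged into one kernel-verified Lean document; each statement's English description precedes it below -/
import Mathlib

section
/- Let A_{ij}, for 0 ≤ i, j ≤ N, be complex d×d matrices satisfying (A_{ij})ᵀ = A_{ji} for all i, j. For nonzero λ ∈ ℂ define L(λ) = det(Σ_{i,j=0}^N λ^{j−i} A_{ij}). Then L(λ⁻¹) = L(λ) for every nonzero λ; in particular, a nonzero λ satisfies L(λ) = 0 if and only if L(λ⁻¹) = 0. -/
/-! Transposing `∑ λ^(j-i) • A i j` and using `(A i j)ᵀ = A j i` swaps the roles of `i` and `j`,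
which is the same as replacing `λ` by `λ⁻¹`; the determinant does not see the transpose. -/

open Finset Matrix

theorem transpose_sum_zpow_smul_of_transpose_eq {K n : Type*} [DivisionRing K] (s : Finset ℕ)
    (A : ℕ → ℕ → Matrix n n K) (hsym : ∀ i j, (A i j)ᵀ = A j i) (lam : K) :
    (∑ i ∈ s, ∑ j ∈ s, lam ^ ((j : ℤ) - (i : ℤ)) • A i j)ᵀ =
      ∑ i ∈ s, ∑ j ∈ s, lam⁻¹ ^ ((j : ℤ) - (i : ℤ)) • A i j := by
  simp only [transpose_sum, transpose_smul, hsym]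
  rw [Finset.sum_comm]
  refine sum_congr rfl fun i _ => sum_congr rfl fun j _ => ?_
  rw [_root_.inv_zpow', neg_sub]

theorem det_sum_zpow_smul_inv_of_transpose_eq {K n : Type*} [Field K] [Fintype n]
    [DecidableEq n] (s : Finset ℕ) (A : ℕ → ℕ → Matrix n n K)
    (hsym : ∀ i j, (A i j)ᵀ = A j i) (lam : K) :
    (∑ i ∈ s, ∑ j ∈ s, lam⁻¹ ^ ((j : ℤ) - (i : ℤ)) • A i j).det =
      (∑ i ∈ s, ∑ j ∈ s, lam ^ ((j : ℤ) - (i : ℤ)) • A i j).det := by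
  rw [← transpose_sum_zpow_smul_of_transpose_eq s A hsym, det_transpose]

/-- Spectral symmetry for Euler–Lagrange linearizations:
if `A_{ij}ᵀ = A_{ji}` and `L(λ) = det(Σ_{i,j=0}^N λ^{j−i} A_{ij})`, then
`L(λ⁻¹) = L(λ)` for every nonzero `λ`, and in particular `L(λ) = 0 ↔ L(λ⁻¹) = 0`. -/
theorem lagrangian_spectrum_symmetry {d N : ℕ}
    (A : ℕ → ℕ → Matrix (Fin d) (Fin d) ℂ)
    (hsym : ∀ i j, (A i j)ᵀ = A j i)
    (L : ℂ → ℂ)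
    (hL : ∀ lam : ℂ, L lam =
      (∑ i ∈ Finset.range (N + 1), ∑ j ∈ Finset.range (N + 1),
        lam ^ ((j : ℤ) - (i : ℤ)) • A i j).det) :
    ∀ lam : ℂ, lam ≠ 0 → (L lam⁻¹ = L lam ∧ (L lam = 0 ↔ L lam⁻¹ = 0)) := by
  intro lam _
  have hinv : L lam⁻¹ = L lam := by
    rw [hL, hL, det_sum_zpow_smul_inv_of_transpose_eq _ A hsym]
  exact ⟨hinv, by rw [hinv]⟩
end

section
/- Let B_0,…,B_N be complex d×d matrices with B_0 invertible, and let λ = (λ_1,…,λ_m) be a stable non-resonant vector of eigenvalues for B_0,…,B_N. Then there exists a constant C > 0 such that for every multi-index α ∈ ℕ^m with |α| ≥ 2, the matrix T(λ^α) is invertible and ‖T(λ^α)⁻¹‖ ≤ C. -/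
open Finset

/-- `T(μ) = Σ_{i=0}^N μ^i B_i`. -/
noncomputable def linT {d : ℕ} (N : ℕ) (B : ℕ → Matrix (Fin d) (Fin d) ℂ) (μ : ℂ) :
    Matrix (Fin d) (Fin d) ℂ :=
  ∑ i ∈ Finset.range (N + 1), μ ^ i • B i

/-- The characteristic polynomial `F(μ) = det T(μ)`. -/
noncomputable def charF {d : ℕ} (N : ℕ) (B : ℕ → Matrix (Fin d) (Fin d) ℂ) (μ : ℂ) : ℂ :=
  (linT N B μ).det

/-- `λ^α = λ₁^{α₁} ⋯ λ_m^{α_m}` for a multi-index `α ∈ ℕ^m`. -/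
def mIdxPow {m : ℕ} (lam : Fin m → ℂ) (α : Fin m → ℕ) : ℂ :=
  ∏ j, lam j ^ α j

/-- `|α| = α₁ + ⋯ + α_m`. -/
def mIdxSize {m : ℕ} (α : Fin m → ℕ) : ℕ :=
  ∑ j, α j

/-- `λ = (λ₁,…,λ_m)` is a stable non-resonant vector of eigenvalues for
`B_0,…,B_N` : each `|λ_j| < 1` with `F(λ_j) = 0`, and `F(λ^α) ≠ 0` for every
multi-index `α` with `|α| ≥ 2`. -/
def StableNonResonant {d m : ℕ} (N : ℕ) (B : ℕ → Matrix (Fin d) (Fin d) ℂ)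
    (lam : Fin m → ℂ) : Prop :=
  (∀ j, ‖lam j‖ < 1 ∧ charF N B (lam j) = 0) ∧
  ∀ α : Fin m → ℕ, 2 ≤ mIdxSize α → charF N B (mIdxPow lam α) ≠ 0

/-- Operator norm of a complex matrix, acting by `mulVec` on `ℂ^d` with the
sup norm. -/
noncomputable def matOpNorm {d : ℕ} (M : Matrix (Fin d) (Fin d) ℂ) : ℝ :=
  ‖LinearMap.toContinuousLinearMap (Matrix.mulVecLin M)‖

/-!
The values `λ^α`, `|α| ≥ 2`, accumulate only at `0`: `‖λ^α‖ ≤ ρ^|α|` for some `ρ < 1`,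
and only finitely many `α` have `|α| ≤ K`. Together with `0` they form a compact set on
which `F` does not vanish (`F(0) = det B_0`), and `μ ↦ ‖T(μ)⁻¹‖` is continuous wherever
`F(μ) ≠ 0`, hence bounded on that compact set.
-/

open Filter Topology Set

theorem exists_forall_le_of_tendsto_cofinite {ι X Y : Type*} [TopologicalSpace X]
    [TopologicalSpace Y] [LinearOrder Y] [ClosedIciTopology Y] [Nonempty Y]
    {f : ι → X} {x : X} (hf : Tendsto f cofinite (𝓝 x)) {g : X → Y}
    (hg : ∀ y ∈ insert x (range f), ContinuousAt g y) : ∃ C, ∀ i, g (f i) ≤ C := by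
  obtain ⟨C, hC⟩ := hf.isCompact_insert_range_of_cofinite.bddAbove_image
    fun y hy => (hg y hy).continuousWithinAt
  exact ⟨C, fun i => hC (mem_image_of_mem g (mem_insert_of_mem _ (mem_range_self i)))⟩

theorem tendsto_mIdxSize_cofinite_atTop {m : ℕ} :
    Tendsto (mIdxSize : (Fin m → ℕ) → ℕ) cofinite atTop := by
  refine tendsto_atTop.2 fun K => eventually_cofinite.2 ?_
  refine (Set.Finite.pi fun _ => finite_Iio K).subset fun α hα j _ => ?_
  exact (single_le_sum (fun i _ => Nat.zero_le (α i)) (mem_univ j)).trans_lt (not_le.1 hα)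

theorem norm_mIdxPow_le {m : ℕ} {lam : Fin m → ℂ} {ρ : ℝ} (h : ∀ j, ‖lam j‖ ≤ ρ)
    (α : Fin m → ℕ) : ‖mIdxPow lam α‖ ≤ ρ ^ mIdxSize α := by
  rw [mIdxPow, mIdxSize, norm_prod, ← prod_pow_eq_pow_sum]
  exact prod_le_prod (fun j _ => by positivity) fun j _ =>
    (norm_pow _ _).trans_le (pow_le_pow_left₀ (norm_nonneg _) (h j) _)

theorem tendsto_mIdxPow_cofinite {m : ℕ} {lam : Fin m → ℂ} (h : ∀ j, ‖lam j‖ < 1) :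
    Tendsto (mIdxPow lam) cofinite (𝓝 0) := by
  obtain ⟨ρ, hρ, hρ1⟩ : ∃ ρ : ℝ, (∀ j, ‖lam j‖ ≤ ρ) ∧ ρ ∈ Set.Ioo 0 1 :=
    ((eventually_all.2 fun j => eventually_nhdsWithin_of_eventually_nhds
      ((eventually_gt_nhds (h j)).mono fun _ => le_of_lt)).and (Ioo_mem_nhdsLT one_pos)).exists
  exact squeeze_zero_norm (norm_mIdxPow_le hρ)
    ((tendsto_pow_atTop_nhds_zero_of_lt_one hρ1.1.le hρ1.2).comp tendsto_mIdxSize_cofinite_atTop)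

theorem linT_zero {d N : ℕ} (B : ℕ → Matrix (Fin d) (Fin d) ℂ) : linT N B 0 = B 0 := by
  rw [linT, sum_eq_single 0 (fun i _ hi => by simp [zero_pow hi]) (by simp)]
  simp

theorem continuous_linT {d N : ℕ} (B : ℕ → Matrix (Fin d) (Fin d) ℂ) :
    Continuous (linT N B) :=
  continuous_finsetSum _ fun i _ => (continuous_pow i).smul continuous_const

theorem continuous_matOpNorm {d : ℕ} :
    Continuous (matOpNorm : Matrix (Fin d) (Fin d) ℂ → ℝ) := by
  let L : Matrix (Fin d) (Fin d) ℂ →ₗ[ℂ] (Fin d → ℂ) →L[ℂ] (Fin d → ℂ) :=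
    LinearMap.toContinuousLinearMap.toLinearMap ∘ₗ Matrix.toLin'.toLinearMap
  exact continuous_norm.comp L.continuous_of_finiteDimensional

theorem continuousAt_matOpNorm_inv {d : ℕ} {M : Matrix (Fin d) (Fin d) ℂ} (hM : M.det ≠ 0) :
    ContinuousAt (fun M => matOpNorm M⁻¹) M :=
  continuous_matOpNorm.continuousAt.comp <|
    continuousAt_matrix_inv M (Ring.inverse_eq_inv' (G₀ := ℂ) ▸ continuousAt_inv₀ hM)

/-- If `B_0` is invertible and `λ` is a stable non-resonant
vector of eigenvalues for `B_0,…,B_N`, then there is `C > 0` such that for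
every multi-index `α` with `|α| ≥ 2` the matrix `T(λ^α)` is invertible and
`‖T(λ^α)⁻¹‖ ≤ C`. -/
theorem uniform_bound_on_inverses {d m N : ℕ}
    (B : ℕ → Matrix (Fin d) (Fin d) ℂ) (hB0 : IsUnit (B 0))
    (lam : Fin m → ℂ) (hlam : StableNonResonant N B lam) :
    ∃ C : ℝ, 0 < C ∧ ∀ α : Fin m → ℕ, 2 ≤ mIdxSize α →
      IsUnit (linT N B (mIdxPow lam α)) ∧
      matOpNorm (linT N B (mIdxPow lam α))⁻¹ ≤ C := by
  obtain ⟨hstable, hnonres⟩ := hlam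
  let f : {α : Fin m → ℕ // 2 ≤ mIdxSize α} → ℂ := fun α => mIdxPow lam α
  have hf : Tendsto f cofinite (𝓝 0) :=
    (tendsto_mIdxPow_cofinite fun j => (hstable j).1).comp Subtype.val_injective.tendsto_cofinite
  have hF : ∀ μ ∈ insert 0 (range f), charF N B μ ≠ 0 := by
    rintro _ (rfl | ⟨α, rfl⟩)
    · rw [charF, linT_zero]
      exact ((Matrix.isUnit_iff_isUnit_det _).1 hB0).ne_zero
    · exact hnonres α α.2
  obtain ⟨C, hC⟩ := exists_forall_le_of_tendsto_cofinite hf fun μ hμ =>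
    (continuousAt_matOpNorm_inv (hF μ hμ)).comp (continuous_linT B).continuousAt
  exact ⟨max C 1, one_pos.trans_le (le_max_right _ _), fun α hα =>
    ⟨(Matrix.isUnit_iff_isUnit_det _).2 (hnonres α hα).isUnit,
      (hC ⟨α, hα⟩).trans (le_max_left _ _)⟩⟩
end

section
/- Let D ⊂ ℝ^m be the closed ball of radius ρ > 0 centered at the origin, let Λ be an m×m real matrix, let B_0,…,B_N be real d×d matrices with B_0 invertible, and let r ≥ 1 be an integer. Suppose there is μ with 0 < μ < 1 and ‖Λ‖^r ≤ μ. Then for every C^r map φ : ℝ^m → ℝ^d, the map L(φ) := Σ_{j=1}^N B_0⁻¹ B_j · (φ ∘ Λ^j) satisfies sup_{x ∈ D} ‖D^r(L(φ))(x)‖ ≤ (Σ_{j=1}^N μ^j ‖B_0⁻¹ B_j‖) · sup_{x ∈ D} ‖D^r φ(x)‖, where D^r denotes the r-th Fréchet derivative and the operator norm on symmetric r-linear maps is used. In particular, if Σ_{j=1}^N μ^j ‖B_0⁻¹ B_j‖ < 1, then L is a contraction with respect to the seminorm φ ↦ sup_{x ∈ D} ‖D^r φ(x)‖. -/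
/-!
Each summand of `L φ` is `φ` precomposed with the linear map `Λ^j` and postcomposed with
`B₀⁻¹ B_j`, so its `r`-th derivative at `x` is `D^r φ (Λ^j x)` with every one of its `r`
arguments fed through `Λ^j` and the result through `B₀⁻¹ B_j`; its norm is therefore at most
`‖B₀⁻¹ B_j‖ ‖Λ‖^{jr} ‖D^r φ (Λ^j x)‖ ≤ μ^j ‖B₀⁻¹ B_j‖ ‖D^r φ (Λ^j x)‖`. As `‖Λ‖^r ≤ μ < 1`
with `r ≥ 1` forces `‖Λ‖ ≤ 1`, the point `Λ^j x` stays in the ball `D`, so the last factor is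
bounded by the seminorm of `φ`. The contraction statement is the same estimate applied to
`φ - ψ`, as `L` is linear.
-/

open Finset

/-- Operator norm of a real matrix, acting by `mulVec` on `ℝ^n` with the
sup norm. -/
noncomputable def matOpNormR {n p : ℕ} (M : Matrix (Fin n) (Fin p) ℝ) : ℝ :=
  ‖LinearMap.toContinuousLinearMap (Matrix.mulVecLin M)‖

/-- The `C^r` seminorm `φ ↦ sup_{x ∈ D} ‖D^r φ(x)‖` on the closed ball `D` of
radius `ρ`. -/
noncomputable def crSeminorm {m d : ℕ} (ρ : ℝ) (r : ℕ)
    (φ : (Fin m → ℝ) → (Fin d → ℝ)) : ℝ :=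
  ⨆ x : Metric.closedBall (0 : Fin m → ℝ) ρ, ‖iteratedFDeriv ℝ r φ x‖

open Matrix

section IteratedFDeriv

variable {𝕜 E E' F F' : Type*} [NontriviallyNormedField 𝕜]
  [NormedAddCommGroup E] [NormedSpace 𝕜 E] [NormedAddCommGroup E'] [NormedSpace 𝕜 E']
  [NormedAddCommGroup F] [NormedSpace 𝕜 F] [NormedAddCommGroup F'] [NormedSpace 𝕜 F']

theorem norm_iteratedFDeriv_clm_comp_comp_clm_le (A : F →L[𝕜] F') (T : E →L[𝕜] E')
    {f : E' → F} {r : ℕ} (hf : ContDiff 𝕜 r f) (x : E) :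
    ‖iteratedFDeriv 𝕜 r (A ∘ f ∘ T) x‖ ≤ ‖A‖ * ‖T‖ ^ r * ‖iteratedFDeriv 𝕜 r f (T x)‖ := by
  calc ‖iteratedFDeriv 𝕜 r (A ∘ (f ∘ T)) x‖
      ≤ ‖A‖ * ‖iteratedFDeriv 𝕜 r (f ∘ T) x‖ :=
        A.norm_iteratedFDeriv_comp_left (hf.comp T.contDiff).contDiffAt le_rfl
    _ ≤ ‖A‖ * (‖iteratedFDeriv 𝕜 r f (T x)‖ * ∏ _ : Fin r, ‖T‖) := by
        rw [T.iteratedFDeriv_comp_right hf x le_rfl]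
        gcongr
        exact ContinuousMultilinearMap.norm_compContinuousLinearMap_le _ _
    _ = ‖A‖ * ‖T‖ ^ r * ‖iteratedFDeriv 𝕜 r f (T x)‖ := by
        rw [prod_const, card_univ, Fintype.card_fin]; ring

end IteratedFDeriv

section MatOpNorm

variable {n p q : ℕ}

noncomputable abbrev Matrix.mulVecCLM (M : Matrix (Fin n) (Fin p) ℝ) :
    (Fin p → ℝ) →L[ℝ] (Fin n → ℝ) :=
  LinearMap.toContinuousLinearMap (mulVecLin M)

theorem matOpNormR_nonneg (M : Matrix (Fin n) (Fin p) ℝ) : 0 ≤ matOpNormR M :=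
  norm_nonneg _

theorem norm_mulVec_le_matOpNormR (M : Matrix (Fin n) (Fin p) ℝ) (x : Fin p → ℝ) :
    ‖M *ᵥ x‖ ≤ matOpNormR M * ‖x‖ :=
  M.mulVecCLM.le_opNorm x

theorem matOpNormR_one_le : matOpNormR (1 : Matrix (Fin n) (Fin n) ℝ) ≤ 1 :=
  ContinuousLinearMap.opNorm_le_bound _ zero_le_one fun x => by simp

theorem matOpNormR_mul_le (A : Matrix (Fin n) (Fin p) ℝ) (B : Matrix (Fin p) (Fin q) ℝ) :
    matOpNormR (A * B) ≤ matOpNormR A * matOpNormR B :=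
  ContinuousLinearMap.opNorm_le_bound _
      (mul_nonneg (matOpNormR_nonneg A) (matOpNormR_nonneg B)) fun x => by
    calc ‖(A * B) *ᵥ x‖ = ‖A *ᵥ (B *ᵥ x)‖ := by rw [mulVec_mulVec]
      _ ≤ matOpNormR A * (matOpNormR B * ‖x‖) := by
        grw [norm_mulVec_le_matOpNormR, norm_mulVec_le_matOpNormR]
        exact matOpNormR_nonneg A
      _ = matOpNormR A * matOpNormR B * ‖x‖ := by ring

theorem matOpNormR_pow_le (M : Matrix (Fin n) (Fin n) ℝ) (j : ℕ) :
    matOpNormR (M ^ j) ≤ matOpNormR M ^ j := by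
  induction j with
  | zero => simpa using matOpNormR_one_le
  | succ j ih =>
    rw [pow_succ, pow_succ]
    exact (matOpNormR_mul_le _ _).trans
      (mul_le_mul_of_nonneg_right ih (matOpNormR_nonneg M))

theorem mulVec_pow_mem_closedBall {M : Matrix (Fin n) (Fin n) ℝ} (hM : matOpNormR M ≤ 1)
    (j : ℕ) {ρ : ℝ} {x : Fin n → ℝ} (hx : x ∈ Metric.closedBall 0 ρ) :
    (M ^ j) *ᵥ x ∈ Metric.closedBall 0 ρ := by
  rw [mem_closedBall_zero_iff] at hx ⊢
  calc ‖(M ^ j) *ᵥ x‖ ≤ matOpNormR (M ^ j) * ‖x‖ := norm_mulVec_le_matOpNormR _ _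
    _ ≤ 1 * ρ := mul_le_mul ((matOpNormR_pow_le M j).trans
        (pow_le_one₀ (matOpNormR_nonneg M) hM)) hx (norm_nonneg x) zero_le_one
    _ = ρ := one_mul ρ

end MatOpNorm

section CrSeminorm

variable {m d : ℕ} {ρ : ℝ} {r : ℕ} {φ : (Fin m → ℝ) → (Fin d → ℝ)}

theorem norm_iteratedFDeriv_le_crSeminorm (hφ : ContDiff ℝ r φ) {x : Fin m → ℝ}
    (hx : x ∈ Metric.closedBall 0 ρ) : ‖iteratedFDeriv ℝ r φ x‖ ≤ crSeminorm ρ r φ := by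
  have hbdd : BddAbove (Set.range fun y : Metric.closedBall (0 : Fin m → ℝ) ρ =>
      ‖iteratedFDeriv ℝ r φ y‖) := by
    have := (isCompact_closedBall (0 : Fin m → ℝ) ρ).bddAbove_image
      (hφ.continuous_iteratedFDeriv le_rfl).norm.continuousOn
    rwa [Set.image_eq_range] at this
  exact le_ciSup hbdd ⟨x, hx⟩

theorem crSeminorm_le {a : ℝ} (ha : 0 ≤ a)
    (h : ∀ x ∈ Metric.closedBall 0 ρ, ‖iteratedFDeriv ℝ r φ x‖ ≤ a) : crSeminorm ρ r φ ≤ a :=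
  Real.iSup_le (fun x => h x x.2) ha

theorem crSeminorm_nonneg : 0 ≤ crSeminorm ρ r φ :=
  Real.iSup_nonneg fun _ => norm_nonneg _

end CrSeminorm

section Contraction

variable {m d d' : ℕ} {ρ : ℝ} {r : ℕ} {μ : ℝ} {Λ : Matrix (Fin m) (Fin m) ℝ}
  {φ : (Fin m → ℝ) → (Fin d → ℝ)}

theorem norm_iteratedFDeriv_mulVec_comp_mulVec_pow_le (hΛ1 : matOpNormR Λ ≤ 1)
    (hΛ : matOpNormR Λ ^ r ≤ μ) (hφ : ContDiff ℝ r φ) (C : Matrix (Fin d') (Fin d) ℝ) (j : ℕ)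
    {x : Fin m → ℝ} (hx : x ∈ Metric.closedBall 0 ρ) :
    ‖iteratedFDeriv ℝ r (fun y => C *ᵥ φ ((Λ ^ j) *ᵥ y)) x‖ ≤
      μ ^ j * matOpNormR C * crSeminorm ρ r φ := by
  have hpow : matOpNormR (Λ ^ j) ^ r ≤ μ ^ j := calc
    matOpNormR (Λ ^ j) ^ r ≤ (matOpNormR Λ ^ j) ^ r := by
      gcongr
      exacts [matOpNormR_nonneg _, matOpNormR_pow_le Λ j]
    _ = (matOpNormR Λ ^ r) ^ j := by rw [← pow_mul, ← pow_mul, mul_comm]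
    _ ≤ μ ^ j := by gcongr; exact pow_nonneg (matOpNormR_nonneg Λ) r
  have hμj : 0 ≤ μ ^ j := pow_nonneg ((pow_nonneg (matOpNormR_nonneg Λ) r).trans hΛ) j
  calc ‖iteratedFDeriv ℝ r (C.mulVecCLM ∘ φ ∘ (Λ ^ j).mulVecCLM) x‖
      ≤ matOpNormR C * matOpNormR (Λ ^ j) ^ r * ‖iteratedFDeriv ℝ r φ ((Λ ^ j) *ᵥ x)‖ :=
        norm_iteratedFDeriv_clm_comp_comp_clm_le _ _ hφ x
    _ ≤ matOpNormR C * μ ^ j * crSeminorm ρ r φ :=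
        mul_le_mul (mul_le_mul_of_nonneg_left hpow (matOpNormR_nonneg C))
          (norm_iteratedFDeriv_le_crSeminorm hφ (mulVec_pow_mem_closedBall hΛ1 j hx))
          (norm_nonneg _) (mul_nonneg (matOpNormR_nonneg C) hμj)
    _ = μ ^ j * matOpNormR C * crSeminorm ρ r φ := by ring

theorem crSeminorm_sum_mulVec_comp_mulVec_pow_le (hΛ1 : matOpNormR Λ ≤ 1)
    (hΛ : matOpNormR Λ ^ r ≤ μ) (hφ : ContDiff ℝ r φ) (C : ℕ → Matrix (Fin d') (Fin d) ℝ)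
    (s : Finset ℕ) :
    crSeminorm ρ r (fun x => ∑ j ∈ s, C j *ᵥ φ ((Λ ^ j) *ᵥ x)) ≤
      (∑ j ∈ s, μ ^ j * matOpNormR (C j)) * crSeminorm ρ r φ := by
  have hμ : 0 ≤ μ := (pow_nonneg (matOpNormR_nonneg Λ) r).trans hΛ
  refine crSeminorm_le ?_ fun x hx => ?_
  · exact mul_nonneg (sum_nonneg fun j _ => mul_nonneg (pow_nonneg hμ j) (matOpNormR_nonneg _))
      crSeminorm_nonneg
  have hterm : ∀ j ∈ s, ContDiff ℝ r (fun y => C j *ᵥ φ ((Λ ^ j) *ᵥ y)) := fun j _ =>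
    (C j).mulVecCLM.contDiff.comp (hφ.comp (Λ ^ j).mulVecCLM.contDiff)
  rw [iteratedFDeriv_sum hterm, Finset.sum_apply, sum_mul]
  exact (norm_sum_le _ _).trans (sum_le_sum fun j _ =>
    norm_iteratedFDeriv_mulVec_comp_mulVec_pow_le hΛ1 hΛ hφ (C j) j hx)

end Contraction

theorem contraction_estimate_Cr_general {m d N : ℕ} (ρ : ℝ)
    (Λ : Matrix (Fin m) (Fin m) ℝ)
    (B : ℕ → Matrix (Fin d) (Fin d) ℝ)
    (r : ℕ) (hr : 1 ≤ r)
    (μ : ℝ) (hμ1 : μ < 1) (hΛ : matOpNormR Λ ^ r ≤ μ)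
    (L : ((Fin m → ℝ) → (Fin d → ℝ)) → ((Fin m → ℝ) → (Fin d → ℝ)))
    (hL : ∀ φ x, L φ x =
      ∑ j ∈ Finset.Icc 1 N, ((B 0)⁻¹ * B j).mulVec (φ ((Λ ^ j).mulVec x))) :
    (∀ φ : (Fin m → ℝ) → (Fin d → ℝ), ContDiff ℝ r φ →
      crSeminorm ρ r (L φ) ≤
        (∑ j ∈ Finset.Icc 1 N, μ ^ j * matOpNormR ((B 0)⁻¹ * B j)) *
          crSeminorm ρ r φ) ∧
    ((∑ j ∈ Finset.Icc 1 N, μ ^ j * matOpNormR ((B 0)⁻¹ * B j)) < 1 →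
      ∀ φ ψ : (Fin m → ℝ) → (Fin d → ℝ), ContDiff ℝ r φ → ContDiff ℝ r ψ →
        crSeminorm ρ r (fun x => L φ x - L ψ x) ≤
          (∑ j ∈ Finset.Icc 1 N, μ ^ j * matOpNormR ((B 0)⁻¹ * B j)) *
            crSeminorm ρ r (fun x => φ x - ψ x)) := by
  have hΛ1 : matOpNormR Λ ≤ 1 :=
    (pow_le_one_iff_of_nonneg (matOpNormR_nonneg Λ) (by omega)).mp (hΛ.trans hμ1.le)
  have hLφ : ∀ φ, L φ = fun x => ∑ j ∈ Icc 1 N, ((B 0)⁻¹ * B j) *ᵥ φ ((Λ ^ j) *ᵥ x) :=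
    fun φ => funext (hL φ)
  refine ⟨fun φ hφ => ?_, fun _ φ ψ hφ hψ => ?_⟩
  · rw [hLφ]
    exact crSeminorm_sum_mulVec_comp_mulVec_pow_le hΛ1 hΛ hφ _ _
  · have hsub : (fun x => L φ x - L ψ x) = L (fun x => φ x - ψ x) := by
      ext1 x
      simp only [hL, ← sum_sub_distrib, mulVec_sub]
    rw [hsub, hLφ]
    exact crSeminorm_sum_mulVec_comp_mulVec_pow_le hΛ1 hΛ (hφ.sub hψ) _ _

/-- The contraction estimate for
`L(φ) = Σ_{j=1}^N B₀⁻¹ B_j (φ ∘ Λ^j)` : if `0 < μ < 1` and `‖Λ‖^r ≤ μ`, then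
for every `C^r` map `φ`, `sup_D ‖D^r(Lφ)‖ ≤ (Σ_{j=1}^N μ^j ‖B₀⁻¹B_j‖) sup_D ‖D^r φ‖`;
in particular if `Σ_{j=1}^N μ^j ‖B₀⁻¹B_j‖ < 1` then `L` is a contraction for
this seminorm. -/
theorem contraction_estimate_Cr {m d N : ℕ} (ρ : ℝ) (hρ : 0 < ρ)
    (Λ : Matrix (Fin m) (Fin m) ℝ)
    (B : ℕ → Matrix (Fin d) (Fin d) ℝ) (hB0 : IsUnit (B 0))
    (r : ℕ) (hr : 1 ≤ r)
    (μ : ℝ) (hμ0 : 0 < μ) (hμ1 : μ < 1) (hΛ : matOpNormR Λ ^ r ≤ μ)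
    (L : ((Fin m → ℝ) → (Fin d → ℝ)) → ((Fin m → ℝ) → (Fin d → ℝ)))
    (hL : ∀ φ x, L φ x =
      ∑ j ∈ Finset.Icc 1 N, ((B 0)⁻¹ * B j).mulVec (φ ((Λ ^ j).mulVec x))) :
    (∀ φ : (Fin m → ℝ) → (Fin d → ℝ), ContDiff ℝ r φ →
      crSeminorm ρ r (L φ) ≤
        (∑ j ∈ Finset.Icc 1 N, μ ^ j * matOpNormR ((B 0)⁻¹ * B j)) *
          crSeminorm ρ r φ) ∧
    ((∑ j ∈ Finset.Icc 1 N, μ ^ j * matOpNormR ((B 0)⁻¹ * B j)) < 1 →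
      ∀ φ ψ : (Fin m → ℝ) → (Fin d → ℝ), ContDiff ℝ r φ → ContDiff ℝ r ψ →
        crSeminorm ρ r (fun x => L φ x - L ψ x) ≤
          (∑ j ∈ Finset.Icc 1 N, μ ^ j * matOpNormR ((B 0)⁻¹ * B j)) *
            crSeminorm ρ r (fun x => φ x - ψ x)) :=
  contraction_estimate_Cr_general ρ Λ B r hr μ hμ1 hΛ L hL
end

section
/- Let η > 0 and set λ = e^{−η}. Define P : ℝ → ℝ by P(z) = 2 sinh(η) z / (z² + 1). Then for every z ∈ ℝ, P(λ² z) + P(z) = 2 cosh(η) P(λz) / (P(λz)² + 1). -/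
/-! With `a = e^η` we have `λ = a⁻¹`, `2 sinh η = a - a⁻¹` and `2 cosh η = a + a⁻¹`, and in the
variable `w = λ z` the claim becomes `P(w / a) + P(a w) = (a + a⁻¹) P(w) / (P(w)² + 1)`.
This is a rational identity resting on the factorization
`(w² + 1)² + (a - a⁻¹)² w² = (a² w² + 1)(a⁻² w² + 1)` of the numerator of `P(w)² + 1`. -/

section StableProfile

variable {K : Type*} [Field K] [LinearOrder K] [IsStrictOrderedRing K]

/-- `P(z) = 2 sinh(η) z / (z² + 1)` written in terms of `a = e^η`. -/
def stableProfile (a z : K) : K := (a - a⁻¹) * z / (z ^ 2 + 1)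

theorem stableProfile_sq_add_one {a : K} (ha : a ≠ 0) (w : K) :
    stableProfile a w ^ 2 + 1 = ((a * w) ^ 2 + 1) * ((w / a) ^ 2 + 1) / (w ^ 2 + 1) ^ 2 := by
  unfold stableProfile
  field_simp
  ring

theorem stableProfile_div_add_stableProfile_mul {a : K} (ha : a ≠ 0) (w : K) :
    stableProfile a (w / a) + stableProfile a (a * w) =
      (a + a⁻¹) * stableProfile a w / (stableProfile a w ^ 2 + 1) := by
  rw [stableProfile_sq_add_one ha]
  unfold stableProfile
  field_simp
  ring

end StableProfile

theorem mcmillan_parameterization_general (η : ℝ)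
    (lam : ℝ) (hlam : lam = Real.exp (-η))
    (P : ℝ → ℝ) (hP : ∀ z : ℝ, P z = 2 * Real.sinh η * z / (z ^ 2 + 1)) :
    ∀ z : ℝ,
      P (lam ^ 2 * z) + P z = 2 * Real.cosh η * P (lam * z) / ((P (lam * z)) ^ 2 + 1) := by
  intro z
  set a := Real.exp η
  have ha : a ≠ 0 := (Real.exp_pos η).ne'
  have hlam_inv : lam = a⁻¹ := by rw [hlam, Real.exp_neg]
  have hP_profile : P = stableProfile a := by
    ext w
    rw [hP, stableProfile, Real.sinh_eq, Real.exp_neg]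
    ring
  have hcosh : 2 * Real.cosh η = a + a⁻¹ := by
    rw [Real.cosh_eq, Real.exp_neg]
    ring
  have hz : z = a * (lam * z) := by
    rw [hlam_inv, ← mul_assoc, mul_inv_cancel₀ ha, one_mul]
  have hlam_sq : lam ^ 2 * z = lam * z / a := by
    rw [hlam_inv]
    ring
  rw [hcosh, hP_profile]
  have key := stableProfile_div_add_stableProfile_mul ha (lam * z)
  rwa [← hlam_sq, ← hz] at key

/-- The McMillan map parameterized stable solution:
with `λ = e^{-η}` and `P(z) = 2 sinh(η) z / (z² + 1)`, one has
`P(λ² z) + P(z) = 2 cosh(η) P(λz) / (P(λz)² + 1)` for all real `z`. -/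
theorem mcmillan_parameterization (η : ℝ) (hη : 0 < η)
    (lam : ℝ) (hlam : lam = Real.exp (-η))
    (P : ℝ → ℝ) (hP : ∀ z : ℝ, P z = 2 * Real.sinh η * z / (z ^ 2 + 1)) :
    ∀ z : ℝ,
      P (lam ^ 2 * z) + P z = 2 * Real.cosh η * P (lam * z) / ((P (lam * z)) ^ 2 + 1) :=
  mcmillan_parameterization_general η lam hlam P hP
end

section
/- Let f(θ) = 2θ/(1−θ), defined for θ < 1, and P(z) = z/(1−z). Then for every z ∈ (−1/2, 1/2): (i) f(P(z/2)) = P(z); and (ii) Z(P(z), P(z/2), P(z/4)) = 0, where Z(θ_0, θ_1, θ_2) = (f(θ_1) − θ_0) f'(θ_1) + (θ_1 − f(θ_2)). -/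
theorem two_mul_div_one_sub_of_half_div_one_sub {z : ℝ} (hz : z ≠ 2) :
    2 * (z / 2 / (1 - z / 2)) / (1 - z / 2 / (1 - z / 2)) = z / (1 - z) := by
  rcases eq_or_ne z 1 with rfl | hz₁
  · norm_num
  have h₂ : (1 : ℝ) - z / 2 ≠ 0 := fun h => hz (by linarith)
  have h₁ : (1 : ℝ) - z ≠ 0 := sub_ne_zero.mpr hz₁.symm
  have hden : 1 - z / 2 / (1 - z / 2) = (1 - z) / (1 - z / 2) := by
    field_simp
    ring
  rw [hden]
  field_simp

/-- With `f(θ) = 2θ/(1-θ)` and `P(z) = z/(1-z)`, for every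
`z ∈ (-1/2, 1/2)` one has `f(P(z/2)) = P(z)` and
`Z(P(z), P(z/2), P(z/4)) = 0` where
`Z(θ₀,θ₁,θ₂) = (f(θ₁) − θ₀) f'(θ₁) + (θ₁ − f(θ₂))`. -/
theorem parameterized_solution_non_dynamical
    (f : ℝ → ℝ) (hf : ∀ θ : ℝ, f θ = 2 * θ / (1 - θ))
    (P : ℝ → ℝ) (hP : ∀ z : ℝ, P z = z / (1 - z))
    (Z : ℝ → ℝ → ℝ → ℝ)
    (hZ : ∀ θ₀ θ₁ θ₂ : ℝ, Z θ₀ θ₁ θ₂ = (f θ₁ - θ₀) * deriv f θ₁ + (θ₁ - f θ₂)) :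
    ∀ z : ℝ, -(1/2 : ℝ) < z → z < 1/2 →
      f (P (z / 2)) = P z ∧ Z (P z) (P (z / 2)) (P (z / 4)) = 0 := by
  intro z hl hr
  have semiconj : ∀ w : ℝ, w ≠ 2 → f (P (w / 2)) = P w := fun w hw => by
    rw [hf, hP, hP]
    exact two_mul_div_one_sub_of_half_div_one_sub hw
  have h₀ : f (P (z / 2)) = P z := semiconj z (by linarith)
  have h₁ : f (P (z / 4)) = P (z / 2) := by
    have := semiconj (z / 2) (by linarith)
    rwa [div_div, show (2 : ℝ) * 2 = 4 by norm_num] at this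
  refine ⟨h₀, ?_⟩
  -- Both brackets of `Z` vanish by the semiconjugacy, so `deriv f` never has to be computed.
  rw [hZ, h₀, h₁]
  ring
end
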